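/- Let λ be a composition of d and T a λ-tableau. The only element w of the column group col(T) such that T·w is row-equivalent to T is the identity. Consequently the coefficient c_{T,T} of the tabloid {T} in the Specht vector v_T equals 1. -/

import Mathlib

open Equiv Finset

/-! A composition `λ = (λ_1, …, λ_n)` of `d` is encoded as `lam : Fin n → ℕ` (with, in the
theorems, the hypotheses `∀ i, 0 < lam i` and `∑ i, lam i = d`).  Enumerating the cells of the
Young diagram `[λ]` in row-reading order identifies them with `Fin d`: the cell `(i, j)` (with
`0 ≤ j < λ_i`, 0-indexed) corresponds to `psum lam i + j` where `psum lam i = λ_0 + ⋯ + λ_{i-1}`.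
A `λ`-tableau `T : [λ] → {1, …, d}` is thus encoded as a permutation `T : Perm (Fin d)`, with
`T k` the entry of the `k`-th cell; under this identification `T` itself is its own
row-reading word `w_T`. -/

/-- Partial sum `λ_0 + ⋯ + λ_{i-1}` of a composition. -/
def psum (n : ℕ) (lam : Fin n → ℕ) (i : Fin n) : ℕ :=
  ∑ j ∈ Finset.univ.filter (fun j : Fin n => j < i), lam j

/-- The cells (in row-reading coordinates) of the `i`-th row of the Young diagram of `lam`. -/
def rowCells (n d : ℕ) (lam : Fin n → ℕ) (i : Fin n) : Finset (Fin d) :=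
  Finset.univ.filter fun k : Fin d =>
    psum n lam i ≤ (k : ℕ) ∧ (k : ℕ) < psum n lam i + lam i

/-- The cells (in row-reading coordinates) of the `j`-th column of the Young diagram of `lam`. -/
def colCells (n d : ℕ) (lam : Fin n → ℕ) (j : ℕ) : Finset (Fin d) :=
  Finset.univ.filter fun k : Fin d => ∃ i : Fin n, (k : ℕ) = psum n lam i + j ∧ j < lam i

/-- A tableau is row standard if its entries increase along each row. -/
def RowStandard (n d : ℕ) (lam : Fin n → ℕ) (T : Perm (Fin d)) : Prop :=
  ∀ i : Fin n, ∀ k ∈ rowCells n d lam i, ∀ k' ∈ rowCells n d lam i, k < k' → T k < T k'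

/-- A tableau is standard if its entries increase along each row and down each column. -/
def Standard (n d : ℕ) (lam : Fin n → ℕ) (T : Perm (Fin d)) : Prop :=
  RowStandard n d lam T ∧
    ∀ i i' : Fin n, ∀ j : ℕ, ∀ k k' : Fin d,
      (k : ℕ) = psum n lam i + j → (k' : ℕ) = psum n lam i' + j →
      j < lam i → j < lam i' → i < i' → T k < T k'

/-- Two tableaux are row-equivalent if corresponding rows have equal entry sets. -/
def RowEquiv (n d : ℕ) (lam : Fin n → ℕ) (T T' : Perm (Fin d)) : Prop :=
  ∀ i : Fin n, (rowCells n d lam i).image T = (rowCells n d lam i).image T'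

/-- Row-equivalence as a setoid on tableaux. -/
def rowSetoid (n d : ℕ) (lam : Fin n → ℕ) : Setoid (Perm (Fin d)) :=
  ⟨RowEquiv n d lam,
    fun _ _ => rfl,
    fun h i => (h i).symm,
    fun h h' i => (h i).trans (h' i)⟩

/-- A tabloid is a row-equivalence class of tableaux. -/
def Tabloid (n d : ℕ) (lam : Fin n → ℕ) : Type :=
  Quotient (rowSetoid n d lam)

/-- The right action of `w ∈ Σ_d` on tableaux, `(T·w)(c) = w⁻¹(T(c))`. -/
def tabAct (d : ℕ) (T : Perm (Fin d)) (w : Perm (Fin d)) : Perm (Fin d) :=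
  w⁻¹ * T

/-- The column group `col(T)`: permutations of the entries preserving the entry set of each
column of `T`. -/
def colGroup (n d : ℕ) (lam : Fin n → ℕ) (T : Perm (Fin d)) : Set (Perm (Fin d)) :=
  {w | ∀ j : ℕ, ((colCells n d lam j).image T).image w = (colCells n d lam j).image T}

open scoped Classical in
/-- The Specht vector `v_T = ∑_{w ∈ col(T)} sgn(w) · {T·w}` in the free `ℤ`-module on
tabloids. -/
noncomputable def spechtVector (n d : ℕ) (lam : Fin n → ℕ) (T : Perm (Fin d)) :
    Tabloid n d lam →₀ ℤ :=
  ∑ w ∈ Finset.univ.filter (fun w => w ∈ colGroup n d lam T),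
    (Perm.sign w : ℤ) • Finsupp.single (Quotient.mk (rowSetoid n d lam) (tabAct d T w)) 1

/-- The length of a permutation: its number of inversions. -/
def invLength (d : ℕ) (w : Perm (Fin d)) : ℕ :=
  (Finset.univ.filter fun p : Fin d × Fin d => p.1 < p.2 ∧ w p.2 < w p.1).card

/-- The Bruhat order on `Σ_d`: `u ≤ w` iff `u` is obtained from `w` by repeatedly multiplying
by transpositions, decreasing the length at each step. -/
def BruhatLE (d : ℕ) (u w : Perm (Fin d)) : Prop :=
  Relation.ReflTransGen
    (fun x y => (∃ a b : Fin d, a ≠ b ∧ y = x * Equiv.swap a b) ∧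
      invLength d y < invLength d x) w u

/-- The Young subgroup `W_λ ≤ Σ_d`: permutations stabilizing each consecutive block
`B_i = {λ_0 + ⋯ + λ_{i-1}, …, λ_0 + ⋯ + λ_i - 1}` (0-indexed). -/
def youngSubgroup (n d : ℕ) (lam : Fin n → ℕ) : Subgroup (Perm (Fin d)) where
  carrier := {w | ∀ (i : Fin n) (k : Fin d), k ∈ rowCells n d lam i ↔ w k ∈ rowCells n d lam i}
  one_mem' := by intro i k; simp
  mul_mem' := by
    intro a b ha hb i k
    exact (hb i k).trans (ha i (b k))
  inv_mem' := by
    intro a ha i k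
    have := (ha i (a⁻¹ k)).symm
    simpa using this

/-! Conjugating by `T` turns `w` into the permutation `σ = T⁻¹ w T` of the cells of `[λ]`.
Membership of `w` in `col(T)` says that `σ` maps every column onto itself, and row-equivalence of
`T·w` with `T` says the same for every row. Since the rows cover `[λ]` and a cell is determined by
its row and its column, `σ`, hence `w`, is the identity. So `{T}` occurs in `v_T` only through the
summand `w = 1`, with sign `1`. -/

theorem Finset.exists_sum_Iio_le_lt_sum_Iic {ι : Type*} [Fintype ι] [LinearOrder ι]
    [LocallyFiniteOrderBot ι] [SuccOrder ι] (f : ι → ℕ) {k : ℕ} (hk : k < ∑ i, f i) :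
    ∃ i, ∑ j ∈ Iio i, f j ≤ k ∧ k < ∑ j ∈ Iic i, f j := by
  have hne : (univ : Finset ι).Nonempty := by
    by_contra h
    simp_all [not_nonempty_iff_eq_empty]
  let S := univ.filter fun i => ∑ j ∈ Iio i, f j ≤ k
  have hS : S.Nonempty := by
    refine ⟨univ.min' hne, mem_filter.mpr ⟨mem_univ _, ?_⟩⟩
    rw [Iio_eq_empty.mpr fun j _ => min'_le _ j (mem_univ j), sum_empty]
    exact k.zero_le
  refine ⟨S.max' hS, (mem_filter.mp (S.max'_mem hS)).2, ?_⟩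
  by_contra! hle
  by_cases hmax : IsMax (S.max' hS)
  · rw [show Iic (S.max' hS) = univ from eq_univ_of_forall fun j =>
      mem_Iic.mpr (le_of_not_gt hmax.not_lt)] at hle
    exact hle.not_gt hk
  · have : Order.succ (S.max' hS) ∈ S := by
      simpa [S, Finset.Iio_succ_eq_Iic_of_not_isMax hmax] using hle
    exact (Order.lt_succ_of_not_isMax hmax).not_ge (S.le_max' _ this)

theorem Finset.image_conj_eq_of_image_image_eq {α : Type*} [DecidableEq α] {S : Finset α}
    {T u : Perm α} (h : (S.image T).image u = S.image T) : S.image (T⁻¹ * u * T) = S := by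
  rw [Perm.coe_mul, Perm.coe_mul, ← image_image, ← image_image, h, image_image]
  simp

section YoungDiagram

variable {n d : ℕ} {lam : Fin n → ℕ}

theorem psum_eq_sum_Iio (i : Fin n) : psum n lam i = ∑ j ∈ Iio i, lam j := by
  rw [psum, filter_gt_eq_Iio]

theorem psum_add_eq_sum_Iic (i : Fin n) : psum n lam i + lam i = ∑ j ∈ Iic i, lam j := by
  rw [psum_eq_sum_Iio, ← Iio_insert, sum_insert notMem_Iio_self, add_comm]

theorem psum_add_le_psum {i i' : Fin n} (h : i < i') : psum n lam i + lam i ≤ psum n lam i' := by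
  rw [psum_add_eq_sum_Iic, psum_eq_sum_Iio]
  exact sum_le_sum_of_subset fun j hj => mem_Iio.mpr ((mem_Iic.mp hj).trans_lt h)

theorem mem_rowCells_iff {i : Fin n} {k : Fin d} :
    k ∈ rowCells n d lam i ↔ psum n lam i ≤ k ∧ (k : ℕ) < psum n lam i + lam i := by
  simp [rowCells]

theorem eq_of_mem_rowCells_of_mem_rowCells {i i' : Fin n} {k : Fin d}
    (h : k ∈ rowCells n d lam i) (h' : k ∈ rowCells n d lam i') : i = i' := by
  rw [mem_rowCells_iff] at h h'
  by_contra hne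
  rcases lt_or_gt_of_ne hne with hlt | hlt
  · have := psum_add_le_psum (lam := lam) hlt; omega
  · have := psum_add_le_psum (lam := lam) hlt; omega

theorem exists_mem_rowCells (hsum : ∑ i, lam i = d) (k : Fin d) :
    ∃ i, k ∈ rowCells n d lam i := by
  obtain ⟨i, hi⟩ := exists_sum_Iio_le_lt_sum_Iic lam (k.isLt.trans_eq hsum.symm)
  refine ⟨i, mem_rowCells_iff.mpr ?_⟩
  rwa [psum_add_eq_sum_Iic, psum_eq_sum_Iio]

theorem mem_colCells_sub_psum {i : Fin n} {k : Fin d} (h : k ∈ rowCells n d lam i) :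
    k ∈ colCells n d lam (k - psum n lam i) := by
  rw [mem_rowCells_iff] at h
  simp only [colCells, mem_filter, mem_univ, true_and]
  exact ⟨i, by omega, by omega⟩

theorem val_eq_psum_add_of_mem_rowCells_of_mem_colCells {i : Fin n} {j : ℕ} {k : Fin d}
    (hr : k ∈ rowCells n d lam i) (hc : k ∈ colCells n d lam j) : (k : ℕ) = psum n lam i + j := by
  simp only [colCells, mem_filter, mem_univ, true_and] at hc
  obtain ⟨i', hk, hj⟩ := hc
  have hr' : k ∈ rowCells n d lam i' := mem_rowCells_iff.mpr (by omega)
  rwa [eq_of_mem_rowCells_of_mem_rowCells hr hr']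

theorem eq_one_of_image_rowCells_of_image_colCells (hsum : ∑ i, lam i = d) {σ : Perm (Fin d)}
    (hrow : ∀ i, (rowCells n d lam i).image σ = rowCells n d lam i)
    (hcol : ∀ j, (colCells n d lam j).image σ = colCells n d lam j) : σ = 1 := by
  ext k
  obtain ⟨i, hk⟩ := exists_mem_rowCells hsum k
  have hkc := mem_colCells_sub_psum hk
  have hσr : σ k ∈ rowCells n d lam i := hrow i ▸ mem_image_of_mem σ hk
  have hσc : σ k ∈ colCells n d lam (k - psum n lam i) := hcol _ ▸ mem_image_of_mem σ hkc
  have := val_eq_psum_add_of_mem_rowCells_of_mem_colCells hk hkc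
  have := val_eq_psum_add_of_mem_rowCells_of_mem_colCells hσr hσc
  simp only [Perm.coe_one, id_eq]
  omega

theorem eq_one_of_mem_colGroup_of_rowEquiv (hsum : ∑ i, lam i = d) {T w : Perm (Fin d)}
    (hw : w ∈ colGroup n d lam T) (hrow : RowEquiv n d lam (tabAct d T w) T) : w = 1 := by
  suffices T⁻¹ * w * T = 1 by simpa [mul_assoc, inv_mul_eq_one] using this
  refine eq_one_of_image_rowCells_of_image_colCells hsum (fun i => ?_)
    (fun j => image_conj_eq_of_image_image_eq (hw j))
  refine image_conj_eq_of_image_image_eq ?_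
  nth_rw 1 [← hrow i]
  simp [tabAct, image_image, Function.comp_def]

theorem one_mem_colGroup (T : Perm (Fin d)) : 1 ∈ colGroup n d lam T := fun _ => by
  simp

theorem spechtVector_apply_mk_self {T : Perm (Fin d)}
    (hT : ∀ w ∈ colGroup n d lam T, RowEquiv n d lam (tabAct d T w) T → w = 1) :
    spechtVector n d lam T (Quotient.mk (rowSetoid n d lam) T) = 1 := by
  classical
  unfold spechtVector Tabloid
  rw [Finsupp.finsetSum_apply,
    sum_eq_single_of_mem 1 (mem_filter.mpr ⟨mem_univ _, one_mem_colGroup T⟩)]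
  · simp [tabAct]
  · intro w hw hw1
    have hne : Quotient.mk (rowSetoid n d lam) (tabAct d T w) ≠ Quotient.mk _ T :=
      fun h => hw1 (hT w (mem_filter.mp hw).2 (Quotient.exact h))
    simp [hne]

end YoungDiagram

theorem column_group_row_equivalent_only_identity_and_diagonal_coefficient_one_general
    (n d : ℕ) (lam : Fin n → ℕ) (hsum : ∑ i, lam i = d)
    (T : Perm (Fin d)) :
    (∀ w ∈ colGroup n d lam T, RowEquiv n d lam (tabAct d T w) T → w = 1) ∧
      spechtVector n d lam T (Quotient.mk (rowSetoid n d lam) T) = 1 := by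
  have hT : ∀ w ∈ colGroup n d lam T, RowEquiv n d lam (tabAct d T w) T → w = 1 :=
    fun _ => eq_one_of_mem_colGroup_of_rowEquiv hsum
  exact ⟨hT, spechtVector_apply_mk_self hT⟩

/-- for a composition `λ` of `d` and a `λ`-tableau `T`, the only element `w` of
the column group `col(T)` such that `T·w` is row-equivalent to `T` is the identity;
consequently the coefficient `c_{T,T}` of the tabloid `{T}` in the Specht vector `v_T`
equals `1`. -/
theorem column_group_row_equivalent_only_identity_and_diagonal_coefficient_one
    (n d : ℕ) (lam : Fin n → ℕ) (hpos : ∀ i, 0 < lam i) (hsum : ∑ i, lam i = d)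
    (T : Perm (Fin d)) :
    (∀ w ∈ colGroup n d lam T, RowEquiv n d lam (tabAct d T w) T → w = 1) ∧
      spechtVector n d lam T (Quotient.mk (rowSetoid n d lam) T) = 1 :=
  column_group_row_equivalent_only_identity_and_diagonal_coefficient_one_general n d lam hsum T
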